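/- arXiv:0902.3414 — 10 statements merged into one kernel-verified Lean document; each statement's English description precedes it below -/
import Mathlib

section
/- Let K be a field and q ∈ K with q ≠ 0, and let a weighted graph be the join of weighted graphs T₁,…,T_k with marked vertices v₁,…,v_k: its vertex set is {0} ⊔ V₁ ⊔ … ⊔ V_k (ordered with 0 first, then V₁,…,V_k each with its internal order), where V_j is the vertex set of T_j, vertices in different V_i, V_j are not joined (weight 0), and vertex 0 is joined to each v_j by an edge of weight 1 and to no other vertex. Let T_j(q) be the Coxeter polynomial of T_j, and let T̄_j(q) be the Coxeter polynomial of T_j with the vertex v_j deleted. Then the Coxeter polynomial of the join equals (q + q⁻¹)·∏_{j=1}^k T_j(q) − Σ_{j=1}^k T̄_j(q)·∏_{i ≠ j} T_i(q). -/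
/-!
Writing `M` as the block-diagonal matrix `D` of the `T_j` bordered by the row `r` and column `s` of
the extra vertex, Cauchy's expansion of a bordered determinant gives
`det M = (q + q⁻¹) det D - r ⬝ adj(D) s`. The adjugate of a block-diagonal matrix is block diagonal,
its `j`-th block being `adj(T_j)` times the determinants of the other blocks. Since `r` and `s` are
supported on the marked vertices, with `r_{v_j} s_{v_j} = q q⁻¹ = 1`, only the diagonal cofactors
`adj(T_j)_{v_j v_j} = T̄_j(q)` survive.
-/

open Matrix Finset

namespace Matrix

variable {R : Type*} [CommRing R] {ι : Type*} [Fintype ι] [DecidableEq ι]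

theorem det_option_of_apply_none_some_eq_zero (P : Matrix (Option ι) (Option ι) R)
    (h : ∀ y, P none (some y) = 0) : P.det = P none none * (P.submatrix some some).det := by
  set e := (Equiv.optionEquivSumPUnit.{0} ι).symm
  have hblocks : P.submatrix e e = fromBlocks (P.submatrix some some)
      (of fun x (_ : Unit) => P (some x) none) 0 (of fun _ _ => P none none) := by
    ext (x | _) (y | _) <;> simp [e, h]
  rw [← det_submatrix_equiv_self e, hblocks,
    det_fromBlocks_zero₂₁, det_unique (of fun _ _ => P none none), mul_comm]
  rfl

theorem det_updateRow_none_updateRow_some (P : Matrix (Option ι) (Option ι) R) (x y : ι) :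
    ((P.updateRow none (Pi.single (some y) 1)).updateRow (some x) (Pi.single none 1)).det
      = -adjugate (P.submatrix some some) y x := by
  set Q := (P.updateRow none (Pi.single (some y) 1)).updateRow (some x) (Pi.single none 1)
  set Q' := Q.submatrix (Equiv.swap none (some x)) id
  have hswap : Q'.det = -Q.det := by
    simp [Q', det_permute, Equiv.Perm.sign_swap (Option.some_ne_none x).symm]
  have hinner : Q'.submatrix some some = (P.submatrix some some).updateRow x (Pi.single y 1) := by
    ext a b
    by_cases hab : a = x
    · subst hab; simp [Q', Q, Pi.single_apply]
    · simp [Q', Q, Equiv.swap_apply_of_ne_of_ne, hab, updateRow_apply]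
  have hQ' := det_option_of_apply_none_some_eq_zero Q' (by simp [Q', Q])
  rw [adjugate_apply, ← hinner, ← neg_eq_iff_eq_neg, ← hswap, hQ']
  simp [Q', Q]

theorem det_option_eq_sub_dotProduct_adjugate_mulVec (P : Matrix (Option ι) (Option ι) R) :
    P.det = P none none * (P.submatrix some some).det
      - (fun y => P none (some y)) ⬝ᵥ
          (adjugate (P.submatrix some some) *ᵥ fun x => P (some x) none) := by
  have hcorner : adjugate P none none = (P.submatrix some some).det := by
    rw [adjugate_apply, det_option_of_apply_none_some_eq_zero _ (by simp)]
    simp only [updateRow_self, Pi.single_eq_same, one_mul]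
    congr 1
  have hborder : ∀ y, adjugate P (some y) none
      = -∑ x, adjugate (P.submatrix some some) y x * P (some x) none := by
    intro y
    rw [adjugate_apply, det_eq_sum_mul_adjugate_col _ none, Fintype.sum_option, ← sum_neg_distrib]
    simp [adjugate_apply, det_updateRow_none_updateRow_some, mul_comm]
  rw [det_eq_sum_mul_adjugate_row P none, Fintype.sum_option, hcorner]
  simp [hborder, dotProduct, mulVec, sub_eq_add_neg]

section BlockDiagonal

variable {α : Type*} [DecidableEq α] {m' : α → Type*}

theorem blockDiagonal'_updateRow_single [∀ i, DecidableEq (m' i)]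
    (B : ∀ i, Matrix (m' i) (m' i) R) (i : α) (x y : m' i) :
    (blockDiagonal' B).updateRow ⟨i, y⟩ (Pi.single ⟨i, x⟩ 1)
      = blockDiagonal' (Function.update B i ((B i).updateRow y (Pi.single x 1))) := by
  ext ⟨a, r⟩ ⟨b, c⟩
  by_cases ha : a = i
  · subst ha
    by_cases hr : r = y
    · subst hr
      by_cases hb : b = a
      · subst hb; simp [Pi.single_apply]
      · simp [hb, Ne.symm hb, blockDiagonal'_apply_ne]
    · simp [hr, updateRow_apply, blockDiagonal'_apply]
  · simp [ha, updateRow_apply, blockDiagonal'_apply]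

variable [Fintype α] [∀ i, Fintype (m' i)]

theorem blockDiagonal'_mulVec (A : ∀ i, Matrix (m' i) (m' i) R) (w : (Σ i, m' i) → R) :
    blockDiagonal' A *ᵥ w = fun p => (A p.1 *ᵥ fun x => w ⟨p.1, x⟩) p.2 := by
  ext ⟨i, x⟩
  simp only [mulVec, dotProduct, Fintype.sum_sigma]
  rw [sum_eq_single i]
  · simp [blockDiagonal'_apply_eq]
  · intro j _ hj
    simp [blockDiagonal'_apply_ne A x _ (Ne.symm hj)]
  · simp

theorem dotProduct_blockDiagonal'_mulVec (A : ∀ i, Matrix (m' i) (m' i) R)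
    (u w : (Σ i, m' i) → R) :
    u ⬝ᵥ (blockDiagonal' A *ᵥ w) = ∑ i, (fun x => u ⟨i, x⟩) ⬝ᵥ (A i *ᵥ fun x => w ⟨i, x⟩) := by
  rw [blockDiagonal'_mulVec]
  simp only [dotProduct, Fintype.sum_sigma]

variable [∀ i, DecidableEq (m' i)]

theorem det_blockDiagonal' (B : ∀ i, Matrix (m' i) (m' i) R) :
    (blockDiagonal' B).det = ∏ i, (B i).det := by
  let _ : LinearOrder α := LinearOrder.lift' _ (Fintype.equivFin α).injective
  rw [(blockTriangular_blockDiagonal' B).det_fintype]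
  refine prod_congr rfl fun i _ => ?_
  rw [← det_submatrix_equiv_self (Equiv.sigmaSubtype i).symm]
  congr 1
  ext x y
  exact blockDiagonal'_apply_eq B i x y

theorem det_blockDiagonal'_updateRow_single_of_ne (B : ∀ i, Matrix (m' i) (m' i) R) {i j : α}
    (hij : i ≠ j) (x : m' i) (y : m' j) :
    ((blockDiagonal' B).updateRow ⟨j, y⟩ (Pi.single ⟨i, x⟩ 1)).det = 0 := by
  set N := (blockDiagonal' B).updateRow ⟨j, y⟩ (Pi.single ⟨i, x⟩ 1)
  have hN : ∀ r : Σ a, m' a, ¬r.1 = j → ∀ c : Σ a, m' a, c.1 = j → N r c = 0 := by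
    intro r hr c hc
    change (blockDiagonal' B).updateRow _ _ r c = 0
    rw [updateRow_ne (fun h => hr (congrArg Sigma.fst h))]
    exact blockDiagonal'_apply_ne B r.2 c.2 (hc ▸ hr)
  rw [twoBlockTriangular_det N (·.1 = j) hN]
  refine mul_eq_zero_of_left (det_eq_zero_of_row_eq_zero ⟨⟨j, y⟩, rfl⟩ fun c => ?_) _
  have hc : (c : Σ a, m' a) ≠ ⟨i, x⟩ := fun h => hij ((congrArg Sigma.fst h).symm.trans c.2)
  simp [N, toSquareBlockProp_def, hc]

theorem adjugate_blockDiagonal' (B : ∀ i, Matrix (m' i) (m' i) R) :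
    adjugate (blockDiagonal' B)
      = blockDiagonal' fun i => (∏ j ∈ univ.erase i, (B j).det) • adjugate (B i) := by
  ext ⟨i, x⟩ ⟨j, y⟩
  rw [adjugate_apply]
  rcases eq_or_ne i j with rfl | hij
  · rw [blockDiagonal'_updateRow_single, det_blockDiagonal', blockDiagonal'_apply_eq,
      smul_apply, smul_eq_mul, adjugate_apply, ← mul_prod_erase univ _ (mem_univ i),
      Function.update_self, mul_comm]
    congr 1
    exact prod_congr rfl fun t ht => by rw [Function.update_of_ne (ne_of_mem_erase ht)]
  · rw [det_blockDiagonal'_updateRow_single_of_ne B hij, blockDiagonal'_apply_ne _ _ _ hij]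

end BlockDiagonal

end Matrix

theorem coxeter_join_formula_general {K : Type*} [Field K] (q : K) (hq : q ≠ 0)
    (k : ℕ) (m : Fin k → ℕ)
    (v : ∀ j, Fin (m j + 1))
    (Mb : ∀ j, Matrix (Fin (m j + 1)) (Fin (m j + 1)) K)
    (M : Matrix (Option (Σ j, Fin (m j + 1))) (Option (Σ j, Fin (m j + 1))) K)
    (hM00 : M none none = q + q⁻¹)
    (hM0j : ∀ j x, M none (some ⟨j, x⟩) = if x = v j then -q else 0)
    (hMj0 : ∀ j x, M (some ⟨j, x⟩) none = if x = v j then -q⁻¹ else 0)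
    (hMdiag : ∀ j x y, M (some ⟨j, x⟩) (some ⟨j, y⟩) = Mb j x y)
    (hMoff : ∀ j j' x y, j ≠ j' → M (some ⟨j, x⟩) (some ⟨j', y⟩) = 0) :
    M.det = (q + q⁻¹) * ∏ j, (Mb j).det
      - ∑ j, ((Mb j).submatrix (v j).succAbove (v j).succAbove).det *
          ∏ i ∈ Finset.univ.erase j, (Mb i).det := by
  have hinner : M.submatrix some some = blockDiagonal' Mb := by
    ext ⟨i, x⟩ ⟨j, y⟩
    rcases eq_or_ne i j with rfl | hij
    · simp [hMdiag]
    · simp [hMoff _ _ _ _ hij, blockDiagonal'_apply_ne _ _ _ hij]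
  set marked : (Σ j, Fin (m j + 1)) → K := fun p => if p.2 = v p.1 then 1 else 0
    with hmarked
  have hrow : (fun y => M none (some y)) = -q • marked := by
    ext ⟨j, x⟩
    simp [hM0j, marked]
  have hcol : (fun x => M (some x) none) = -q⁻¹ • marked := by
    ext ⟨j, x⟩
    simp [hMj0, marked]
  have hminor : ∀ j, adjugate (Mb j) (v j) (v j)
      = ((Mb j).submatrix (v j).succAbove (v j).succAbove).det := fun j => by
    rw [adjugate_fin_succ_eq_det_submatrix, Even.neg_one_pow ⟨_, rfl⟩, one_mul]
  rw [det_option_eq_sub_dotProduct_adjugate_mulVec, hM00, hinner, hrow, hcol,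
    det_blockDiagonal', adjugate_blockDiagonal', mulVec_smul, smul_dotProduct, dotProduct_smul,
    dotProduct_blockDiagonal'_mulVec]
  simp only [dotProduct, hmarked, mulVec, Matrix.smul_apply, smul_eq_mul, mul_ite, mul_one,
    mul_zero, sum_ite_eq', mem_univ, ↓reduceIte, ite_mul, one_mul, zero_mul, hminor, neg_mul,
    mul_neg, neg_neg, sub_right_inj]
  rw [mul_inv_cancel_left₀ hq]
  exact sum_congr rfl fun j _ => mul_comm _ _

/-- The join formula (3) for Coxeter polynomials.  The join of weighted graphs
`T₁, …, T_k` (the `j`-th on vertex set `Fin (m j + 1)`, with symmetric weights `a j`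
and marked vertex `v j`) has vertex set `Option (Σ j, Fin (m j + 1))` with the extra
vertex `none` coming first in the order, joined to each `v j` by an edge of weight `1`.
`Sb j` is the Seifert matrix of `T_j`, `Mb j = q • Sb j + q⁻¹ • (Sb j)ᵀ`, and `M` is
the corresponding matrix `q • S + q⁻¹ • Sᵀ` of the join, described entrywise.  Then
the Coxeter polynomial `det M` of the join equals
`(q + q⁻¹) * ∏ j, T_j(q) - ∑ j, T̄_j(q) * ∏_{i ≠ j} T_i(q)`, where `T̄_j` is `T_j`
with the vertex `v j` deleted. -/
theorem coxeter_join_formula {K : Type*} [Field K] (q : K) (hq : q ≠ 0)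
    (k : ℕ) (m : Fin k → ℕ)
    (a : ∀ j, Fin (m j + 1) → Fin (m j + 1) → K)
    (hsym : ∀ j x y, a j x y = a j y x)
    (v : ∀ j, Fin (m j + 1))
    (Sb : ∀ j, Matrix (Fin (m j + 1)) (Fin (m j + 1)) K)
    (hSb : ∀ j x y, Sb j x y = if x = y then 1 else if x < y then -a j x y else 0)
    (Mb : ∀ j, Matrix (Fin (m j + 1)) (Fin (m j + 1)) K)
    (hMb : ∀ j, Mb j = q • Sb j + q⁻¹ • (Sb j)ᵀ)
    (M : Matrix (Option (Σ j, Fin (m j + 1))) (Option (Σ j, Fin (m j + 1))) K)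
    (hM00 : M none none = q + q⁻¹)
    (hM0j : ∀ j x, M none (some ⟨j, x⟩) = if x = v j then -q else 0)
    (hMj0 : ∀ j x, M (some ⟨j, x⟩) none = if x = v j then -q⁻¹ else 0)
    (hMdiag : ∀ j x y, M (some ⟨j, x⟩) (some ⟨j, y⟩) = Mb j x y)
    (hMoff : ∀ j j' x y, j ≠ j' → M (some ⟨j, x⟩) (some ⟨j', y⟩) = 0) :
    M.det = (q + q⁻¹) * ∏ j, (Mb j).det
      - ∑ j, ((Mb j).submatrix (v j).succAbove (v j).succAbove).det *
          ∏ i ∈ Finset.univ.erase j, (Mb i).det :=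
  coxeter_join_formula_general q hq k m v Mb M hM00 hM0j hMj0 hMdiag hMoff
end

section
/- Let K be a field, n ≥ 1, and let a_{ij} = a_{ji} ∈ K be symmetric edge weights of a weighted graph on vertices {1,…,n} with upper unitriangular Seifert matrix S (entry −a_{ij} in position (i,j) for i < j, 1's on the diagonal). For t ∈ K, t ≠ 0, set M(t) = t·S + t⁻¹·Sᵀ, G(t) = det M(t), let N(t) be M(t) with the first row and column deleted, G₁(t) = det N(t), and A_{ij}(t) = (adj N(t))_{ij}. Then for all nonzero x, y ∈ K: G(x)·G₁(y) − G(y)·G₁(x) = (x + x⁻¹ − y − y⁻¹)·G₁(x)·G₁(y) + Σ_{2 ≤ i,j ≤ n} a_{1i}·a_{1j}·(G₁(x)·A_{ij}(y) − G₁(y)·A_{ij}(x)). -/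
open Matrix Finset

/-!
Cauchy's expansion of `det M(t)` along its first row and column gives
`G(t) = (t + t⁻¹) G₁(t) - ∑ a₁ᵢ a₁ⱼ Aᵢⱼ(t)`: the border entries are `M(t)₁ᵢ = -t a₁ᵢ` and
`M(t)ᵢ₁ = -t⁻¹ a₁ᵢ`, so `t` cancels from each product. The identity is this relation at `x`
multiplied by `G₁(y)`, minus the same at `y` multiplied by `G₁(x)`.
-/

section BorderedDeterminant

variable {R : Type*} [CommRing R]

theorem det_submatrix_succ_succAbove_succ {n : ℕ}
    (M : Matrix (Fin (n + 2)) (Fin (n + 2)) R) (i : Fin (n + 1)) :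
    (M.submatrix Fin.succ i.succ.succAbove).det
      = (-1) ^ (i : ℕ) * ∑ j : Fin (n + 1),
          M j.succ 0 * (M.submatrix Fin.succ Fin.succ).adjugate i j := by
  rw [det_succ_column_zero, Finset.mul_sum]
  refine Finset.sum_congr rfl fun j _ => ?_
  have hminor : (M.submatrix Fin.succ i.succ.succAbove).submatrix j.succAbove Fin.succ
      = (M.submatrix Fin.succ Fin.succ).submatrix j.succAbove i.succAbove := by
    ext p q
    simp [Fin.succ_succAbove_succ]
  have hzero : i.succ.succAbove 0 = 0 := Fin.succAbove_of_castSucc_lt _ _ (Fin.succ_pos i)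
  have hsign : (-1 : R) ^ (i : ℕ) * (-1) ^ ((j : ℕ) + i) = (-1) ^ (j : ℕ) := by
    rw [← pow_add, show (i : ℕ) + (j + i) = j + 2 * i by ring, pow_add, pow_mul]
    simp
  rw [adjugate_fin_succ_eq_det_submatrix, submatrix_apply, hzero, hminor]
  linear_combination -(M j.succ 0 *
    ((M.submatrix Fin.succ Fin.succ).submatrix j.succAbove i.succAbove).det) * hsign

theorem det_eq_mul_det_sub_sum_adjugate {n : ℕ} (M : Matrix (Fin (n + 1)) (Fin (n + 1)) R) :
    M.det = M 0 0 * (M.submatrix Fin.succ Fin.succ).det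
      - ∑ i : Fin n, ∑ j : Fin n,
          M 0 i.succ * (M.submatrix Fin.succ Fin.succ).adjugate i j * M j.succ 0 := by
  rcases n with _ | n
  · simp
  rw [det_succ_row_zero, Fin.sum_univ_succ, sub_eq_add_neg, ← Finset.sum_neg_distrib]
  simp only [Fin.val_zero, pow_zero, one_mul, Fin.succAbove_zero, Fin.val_succ]
  congr 1
  refine Finset.sum_congr rfl fun i _ => ?_
  rw [det_submatrix_succ_succAbove_succ, Finset.mul_sum, Finset.mul_sum,
    ← Finset.sum_neg_distrib]
  refine Finset.sum_congr rfl fun j _ => ?_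
  have hsign : (-1 : R) ^ ((i : ℕ) + 1) * (-1) ^ (i : ℕ) = -1 := by
    rw [← pow_add, add_right_comm, ← two_mul, pow_succ, pow_mul]
    simp
  linear_combination (M 0 i.succ * M j.succ 0 *
    (M.submatrix Fin.succ Fin.succ).adjugate i j) * hsign

end BorderedDeterminant

theorem det_smul_add_inv_smul_transpose {K : Type*} [Field K] {n : ℕ}
    (S : Matrix (Fin (n + 1)) (Fin (n + 1)) K) (b : Fin n → K)
    (h₀₀ : S 0 0 = 1) (hrow : ∀ i : Fin n, S 0 i.succ = b i)
    (hcol : ∀ i : Fin n, S i.succ 0 = 0)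
    {t : K} (ht : t ≠ 0) :
    (t • S + t⁻¹ • Sᵀ).det
      = (t + t⁻¹) * ((t • S + t⁻¹ • Sᵀ).submatrix Fin.succ Fin.succ).det
        - ∑ i : Fin n, ∑ j : Fin n,
            b i * b j * ((t • S + t⁻¹ • Sᵀ).submatrix Fin.succ Fin.succ).adjugate i j := by
  rw [det_eq_mul_det_sub_sum_adjugate]
  simp only [Matrix.add_apply, Matrix.smul_apply, transpose_apply, smul_eq_mul, h₀₀, hrow, hcol,
    mul_zero, add_zero, zero_add]
  congr 1
  · ring
  refine Finset.sum_congr rfl fun i _ => Finset.sum_congr rfl fun j _ => ?_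
  field_simp

theorem coxeter_christoffel_darboux_general {K : Type*} [Field K] (n : ℕ)
    (a : Fin (n + 1) → Fin (n + 1) → K)
    (S : Matrix (Fin (n + 1)) (Fin (n + 1)) K)
    (hS : ∀ i j, S i j = if i = j then 1 else if i < j then -a i j else 0)
    (Mf : K → Matrix (Fin (n + 1)) (Fin (n + 1)) K)
    (hMf : ∀ t, Mf t = t • S + t⁻¹ • Sᵀ)
    (G : K → K) (hG : ∀ t, G t = (Mf t).det)
    (Nf : K → Matrix (Fin n) (Fin n) K)
    (hNf : ∀ t, Nf t = (Mf t).submatrix Fin.succ Fin.succ)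
    (G1 : K → K) (hG1 : ∀ t, G1 t = (Nf t).det)
    (Af : K → Matrix (Fin n) (Fin n) K)
    (hAf : ∀ t, Af t = (Nf t).adjugate)
    (x y : K) (hx : x ≠ 0) (hy : y ≠ 0) :
    G x * G1 y - G y * G1 x
      = (x + x⁻¹ - y - y⁻¹) * G1 x * G1 y
        + ∑ i : Fin n, ∑ j : Fin n,
            a 0 i.succ * a 0 j.succ * (G1 x * Af y i j - G1 y * Af x i j) := by
  have hborder : ∀ t, t ≠ 0 → G t = (t + t⁻¹) * G1 t
      - ∑ i : Fin n, ∑ j : Fin n, a 0 i.succ * a 0 j.succ * Af t i j := by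
    intro t ht
    simp only [hG, hG1, hAf, hNf, hMf, ← neg_mul_neg (a 0 _)]
    exact det_smul_add_inv_smul_transpose S (fun i => -a 0 i.succ) (by simp [hS])
      (fun i => by simp [hS, (Fin.succ_ne_zero i).symm, Fin.succ_pos])
      (fun i => by simp [hS, Fin.succ_ne_zero]) ht
  have hsplit : ∑ i : Fin n, ∑ j : Fin n,
        a 0 i.succ * a 0 j.succ * (G1 x * Af y i j - G1 y * Af x i j)
      = G1 x * ∑ i : Fin n, ∑ j : Fin n, a 0 i.succ * a 0 j.succ * Af y i j
        - G1 y * ∑ i : Fin n, ∑ j : Fin n, a 0 i.succ * a 0 j.succ * Af x i j := by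
    simp only [Finset.mul_sum, ← Finset.sum_sub_distrib]
    exact Finset.sum_congr rfl fun i _ => Finset.sum_congr rfl fun j _ => by ring
  rw [hborder x hx, hborder y hy, hsplit]
  ring

/-- The Christoffel–Darboux identity (4) of Proposition 1, multiplied through by
`(x - y)`.  Here the weighted graph has `n + 1` vertices, symmetric weights `a`,
Seifert matrix `S`, `Mf t = t • S + t⁻¹ • Sᵀ`, `G t = det (Mf t)`, `Nf t` is
`Mf t` with the first row and column deleted, `G1 t = det (Nf t)`, and
`Af t = adjugate (Nf t)`. -/
theorem coxeter_christoffel_darboux {K : Type*} [Field K] (n : ℕ)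
    (a : Fin (n + 1) → Fin (n + 1) → K) (hsym : ∀ i j, a i j = a j i)
    (S : Matrix (Fin (n + 1)) (Fin (n + 1)) K)
    (hS : ∀ i j, S i j = if i = j then 1 else if i < j then -a i j else 0)
    (Mf : K → Matrix (Fin (n + 1)) (Fin (n + 1)) K)
    (hMf : ∀ t, Mf t = t • S + t⁻¹ • Sᵀ)
    (G : K → K) (hG : ∀ t, G t = (Mf t).det)
    (Nf : K → Matrix (Fin n) (Fin n) K)
    (hNf : ∀ t, Nf t = (Mf t).submatrix Fin.succ Fin.succ)
    (G1 : K → K) (hG1 : ∀ t, G1 t = (Nf t).det)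
    (Af : K → Matrix (Fin n) (Fin n) K)
    (hAf : ∀ t, Af t = (Nf t).adjugate)
    (x y : K) (hx : x ≠ 0) (hy : y ≠ 0) :
    G x * G1 y - G y * G1 x
      = (x + x⁻¹ - y - y⁻¹) * G1 x * G1 y
        + ∑ i : Fin n, ∑ j : Fin n,
            a 0 i.succ * a 0 j.succ * (G1 x * Af y i j - G1 y * Af x i j) :=
  coxeter_christoffel_darboux_general n a S hS Mf hMf G hG Nf hNf G1 hG1 Af hAf x y hx hy
end

section
/- Let a_{ij} = a_{ji} ∈ ℝ be symmetric edge weights of a weighted graph on vertices {1,…,n} with upper unitriangular Seifert matrix S (entry −a_{ij} in position (i,j) for i < j, 1's on the diagonal). For real t ≠ 0 set M(t) = t·S + t⁻¹·Sᵀ, G(t) = det M(t), let N(t) be M(t) with the first row and column deleted, G₁(t) = det N(t), and A_{ij}(t) = (adj N(t))_{ij}. Then for every real x ≠ 0, with ' denoting the derivative with respect to x: G'(x)·G₁(x) − G(x)·G₁'(x) = (1 − x⁻²)·G₁(x)² + Σ_{2 ≤ i,j ≤ n} a_{1i}·a_{1j}·(G₁'(x)·A_{ij}(x) − G₁(x)·A_{ij}'(x)).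 -/
open Matrix Finset

/-!
Since the corner entry of `M(t)` is `t + t⁻¹` and the rest of its first row and column are
`-t a₁ⱼ` and `-t⁻¹ aᵢ₁`, Cauchy's expansion of a bordered determinant gives, for `t ≠ 0`,
`G = (t + t⁻¹) G₁ - P` with `P = ∑ a₁ᵢ a₁ⱼ Aᵢⱼ`. Differentiating,
`G' G₁ - G G₁' = (t + t⁻¹)' G₁² + (G₁' P - G₁ P')`, which is the identity.
-/

theorem Matrix.det_succ_bordered {R : Type*} [CommRing R] {n : ℕ}
    (A : Matrix (Fin (n + 1)) (Fin (n + 1)) R) :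
    A.det = A 0 0 * (A.submatrix Fin.succ Fin.succ).det
      - ∑ i : Fin n, ∑ j : Fin n,
          A 0 i.succ * (A.submatrix Fin.succ Fin.succ).adjugate i j * A j.succ 0 := by
  cases n with
  | zero => simp [det_unique]
  | succ m =>
    -- Expand along row 0, then each minor along column 0: the signs `(-1) ^ (i + 1 + j)` are
    -- minus the cofactor signs of `adjugate`.
    rw [det_succ_row_zero, Fin.sum_univ_succ, sub_eq_add_neg, ← Finset.sum_neg_distrib]
    simp only [Fin.val_zero, pow_zero, one_mul, Fin.succAbove_zero]
    congr 1
    refine Finset.sum_congr rfl fun i _ => ?_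
    rw [det_succ_column_zero, Finset.mul_sum, ← Finset.sum_neg_distrib]
    refine Finset.sum_congr rfl fun j _ => ?_
    have hcols : (Fin.succ i).succAbove ∘ Fin.succ = Fin.succ ∘ i.succAbove := by
      funext k; simp
    rw [adjugate_fin_succ_eq_det_submatrix]
    simp only [submatrix_apply, submatrix_submatrix, Fin.succ_succAbove_zero, hcols, Fin.val_succ,
      pow_add, pow_one]
    ring

section Differentiability

variable {𝕜 E ι : Type*} [NontriviallyNormedField 𝕜] [NormedAddCommGroup E] [NormedSpace 𝕜 E]
  [Fintype ι] [DecidableEq ι] {F : E → Matrix ι ι 𝕜} {x : E}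

theorem DifferentiableAt.matrix_det (hF : ∀ i j, DifferentiableAt 𝕜 (fun y => F y i j) x) :
    DifferentiableAt 𝕜 (fun y => (F y).det) x := by
  simp only [det_apply']
  fun_prop

theorem DifferentiableAt.matrix_adjugate_apply
    (hF : ∀ i j, DifferentiableAt 𝕜 (fun y => F y i j) x) (i j : ι) :
    DifferentiableAt 𝕜 (fun y => (F y).adjugate i j) x := by
  simp only [adjugate_apply]
  refine .matrix_det fun k l => ?_
  rcases eq_or_ne k j with rfl | hk
  · simpa only [updateRow_self] using differentiableAt_const _
  · simpa only [updateRow_ne hk] using hF k l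

end Differentiability

theorem deriv_mul_sub_mul_deriv_of_eventuallyEq_mul_sub {𝕜 : Type*} [NontriviallyNormedField 𝕜]
    {f g h p : 𝕜 → 𝕜} {x : 𝕜} (hf : f =ᶠ[nhds x] fun t => h t * g t - p t)
    (hh : DifferentiableAt 𝕜 h x) (hg : DifferentiableAt 𝕜 g x) (hp : DifferentiableAt 𝕜 p x) :
    deriv f x * g x - f x * deriv g x
      = deriv h x * g x ^ 2 + (deriv g x * p x - g x * deriv p x) := by
  rw [hf.deriv_eq, hf.eq_of_nhds, deriv_fun_sub (hh.fun_mul hg) hp, deriv_fun_mul hh hg]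
  ring

section Seifert

variable {n : ℕ} {a : Fin (n + 1) → Fin (n + 1) → ℝ} {S : Matrix (Fin (n + 1)) (Fin (n + 1)) ℝ}

theorem det_smul_add_inv_smul_transpose_of_seifert
    (hS : ∀ i j, S i j = if i = j then 1 else if i < j then -a i j else 0)
    {t : ℝ} (ht : t ≠ 0) :
    (t • S + t⁻¹ • Sᵀ).det
      = (t + t⁻¹) * ((t • S + t⁻¹ • Sᵀ).submatrix Fin.succ Fin.succ).det
        - ∑ i : Fin n, ∑ j : Fin n, a 0 i.succ * a 0 j.succ *
            ((t • S + t⁻¹ • Sᵀ).submatrix Fin.succ Fin.succ).adjugate i j := by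
  rw [det_succ_bordered]
  congr 1
  · simp [hS]
  refine Finset.sum_congr rfl fun i _ => Finset.sum_congr rfl fun j _ => ?_
  simp [hS, Fin.succ_pos, (Fin.succ_ne_zero _).symm]
  field_simp

end Seifert

theorem coxeter_wronskian_identity_general (n : ℕ)
    (a : Fin (n + 1) → Fin (n + 1) → ℝ)
    (S : Matrix (Fin (n + 1)) (Fin (n + 1)) ℝ)
    (hS : ∀ i j, S i j = if i = j then 1 else if i < j then -a i j else 0)
    (Mf : ℝ → Matrix (Fin (n + 1)) (Fin (n + 1)) ℝ)
    (hMf : ∀ t, Mf t = t • S + t⁻¹ • Sᵀ)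
    (G : ℝ → ℝ) (hG : ∀ t, G t = (Mf t).det)
    (Nf : ℝ → Matrix (Fin n) (Fin n) ℝ)
    (hNf : ∀ t, Nf t = (Mf t).submatrix Fin.succ Fin.succ)
    (G1 : ℝ → ℝ) (hG1 : ∀ t, G1 t = (Nf t).det)
    (Af : ℝ → Matrix (Fin n) (Fin n) ℝ)
    (hAf : ∀ t, Af t = (Nf t).adjugate)
    (x : ℝ) (hx : x ≠ 0) :
    deriv G x * G1 x - G x * deriv G1 x
      = (1 - (x⁻¹) ^ 2) * (G1 x) ^ 2
        + ∑ i : Fin n, ∑ j : Fin n,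
            a 0 i.succ * a 0 j.succ *
              (deriv G1 x * Af x i j - G1 x * deriv (fun t => Af t i j) x) := by
  have hNf_diff : ∀ i j, DifferentiableAt ℝ (fun t => Nf t i j) x := fun i j => by
    simp only [hNf, hMf, submatrix_apply, Matrix.add_apply, Matrix.smul_apply, transpose_apply,
      smul_eq_mul]
    fun_prop (disch := exact hx)
  have hG1_diff : DifferentiableAt ℝ G1 x := by
    simpa only [← hG1] using DifferentiableAt.matrix_det hNf_diff
  have hAf_diff : ∀ i j, DifferentiableAt ℝ (fun t => Af t i j) x := fun i j => by
    simpa only [← hAf] using DifferentiableAt.matrix_adjugate_apply hNf_diff i j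
  set P : ℝ → ℝ := fun t => ∑ i : Fin n, ∑ j : Fin n, a 0 i.succ * a 0 j.succ * Af t i j
  have hG_eq : G =ᶠ[nhds x] fun t => (t + t⁻¹) * G1 t - P t := by
    filter_upwards [eventually_ne_nhds hx] with t ht
    simp only [P, hG, hG1, hAf, hNf, hMf, det_smul_add_inv_smul_transpose_of_seifert hS ht]
  have hP_deriv : deriv P x
      = ∑ i : Fin n, ∑ j : Fin n, a 0 i.succ * a 0 j.succ * deriv (fun t => Af t i j) x :=
    (HasDerivAt.fun_sum fun i _ => HasDerivAt.fun_sum fun j _ =>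
      (hAf_diff i j).hasDerivAt.const_mul _).deriv
  have h_deriv_add_inv : deriv (fun t => t + t⁻¹) x = 1 - x⁻¹ ^ 2 := by
    rw [((hasDerivAt_id' x).fun_add (hasDerivAt_inv hx)).deriv, inv_pow, sub_eq_add_neg]
  rw [deriv_mul_sub_mul_deriv_of_eventuallyEq_mul_sub hG_eq (by fun_prop (disch := exact hx))
    hG1_diff (by fun_prop), h_deriv_add_inv, hP_deriv]
  simp only [P, Finset.mul_sum, ← Finset.sum_sub_distrib]
  congr 1
  refine Finset.sum_congr rfl fun i _ => Finset.sum_congr rfl fun j _ => ?_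
  ring

/-- The Wronskian identity (5) of Proposition 1, over the reals.  The weighted graph
has `n + 1` vertices, symmetric real weights `a`, Seifert matrix `S`,
`Mf t = t • S + t⁻¹ • Sᵀ`, `G t = det (Mf t)`, `Nf t` is `Mf t` with the first row
and column deleted, `G1 t = det (Nf t)`, `Af t = adjugate (Nf t)`; `'` is the
derivative with respect to the real variable, taken at any `x ≠ 0`. -/
theorem coxeter_wronskian_identity (n : ℕ)
    (a : Fin (n + 1) → Fin (n + 1) → ℝ) (hsym : ∀ i j, a i j = a j i)
    (S : Matrix (Fin (n + 1)) (Fin (n + 1)) ℝ)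
    (hS : ∀ i j, S i j = if i = j then 1 else if i < j then -a i j else 0)
    (Mf : ℝ → Matrix (Fin (n + 1)) (Fin (n + 1)) ℝ)
    (hMf : ∀ t, Mf t = t • S + t⁻¹ • Sᵀ)
    (G : ℝ → ℝ) (hG : ∀ t, G t = (Mf t).det)
    (Nf : ℝ → Matrix (Fin n) (Fin n) ℝ)
    (hNf : ∀ t, Nf t = (Mf t).submatrix Fin.succ Fin.succ)
    (G1 : ℝ → ℝ) (hG1 : ∀ t, G1 t = (Nf t).det)
    (Af : ℝ → Matrix (Fin n) (Fin n) ℝ)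
    (hAf : ∀ t, Af t = (Nf t).adjugate)
    (x : ℝ) (hx : x ≠ 0) :
    deriv G x * G1 x - G x * deriv G1 x
      = (1 - (x⁻¹) ^ 2) * (G1 x) ^ 2
        + ∑ i : Fin n, ∑ j : Fin n,
            a 0 i.succ * a 0 j.succ *
              (deriv G1 x * Af x i j - G1 x * deriv (fun t => Af t i j) x) :=
  coxeter_wronskian_identity_general n a S hS Mf hMf G hG Nf hNf G1 hG1 Af hAf x hx
end

section
/- Let K be a field, q ∈ K nonzero, z = q + q⁻¹, and let a weighted graph on vertices {1,…,n} have symmetric weights a_{ij} such that for some k ≤ n the vertices 1,…,k form a chain attached to the rest of the graph only at vertex k: a_{i,i+1} = 1 for 1 ≤ i ≤ k−1, a_{ij} = 0 for all other pairs 1 ≤ i < j ≤ k, and a_{ij} = 0 whenever i ≤ k−1 and j > k. Let C₀(q) be the Coxeter polynomial of the whole graph and, for 1 ≤ i ≤ k, let C_i(q) be the Coxeter polynomial of the induced subgraph on vertices {i+1,…,n}. Then for all 1 ≤ i ≤ k−1: C_{i−1}(q) − z·C_i(q) + C_{i+1}(q) = 0. -/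
open Matrix Finset

/-- The Seifert matrix of a weighted graph on `Fin n` with symmetric weights `a`. -/
def chainSeifert {K : Type*} [Field K] {n : ℕ} (a : Fin n → Fin n → K) :
    Matrix (Fin n) (Fin n) K :=
  Matrix.of fun i j => if i = j then (1 : K) else if i < j then -a i j else 0

/-- `coxMatrix a t = t • S + t⁻¹ • Sᵀ`, whose determinant is the Coxeter polynomial. -/
def coxMatrix {K : Type*} [Field K] {n : ℕ} (a : Fin n → Fin n → K) (t : K) :
    Matrix (Fin n) (Fin n) K :=
  t • chainSeifert a + t⁻¹ • (chainSeifert a)ᵀ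

/-- `chainC a t i` is the Coxeter polynomial of the induced subgraph on the vertices
`{i, i+1, …, n-1}` of `Fin n` (i.e. vertices `{i+1, …, n}` in 1-based numbering);
for `i = 0` it is the Coxeter polynomial of the whole graph. -/
def chainC {K : Type*} [Field K] {n : ℕ} (a : Fin n → Fin n → K) (t : K) (i : ℕ) : K :=
  ((coxMatrix a t).submatrix
    (fun x : Fin (n - i) => (⟨i + x.val, by have := x.isLt; omega⟩ : Fin n))
    (fun x : Fin (n - i) => (⟨i + x.val, by have := x.isLt; omega⟩ : Fin n))).det

lemma cox_diag {K : Type*} [Field K] {n : ℕ} (a : Fin n → Fin n → K) (t : K) (u : Fin n) :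
    coxMatrix a t u u = t + t⁻¹ := by
  simp [coxMatrix, chainSeifert]

lemma cox_lt {K : Type*} [Field K] {n : ℕ} (a : Fin n → Fin n → K) (t : K) {u v : Fin n}
    (h : (u : ℕ) < (v : ℕ)) : coxMatrix a t u v = -(t * a u v) := by
  have h1 : ¬ u = v := by intro e; subst e; omega
  have h2 : u < v := h
  have h3 : ¬ v = u := fun e => h1 e.symm
  have h4 : ¬ v < u := not_lt.mpr (le_of_lt h2)
  simp [coxMatrix, chainSeifert, h1, h2, h3, h4, smul_eq_mul]

lemma cox_gt {K : Type*} [Field K] {n : ℕ} (a : Fin n → Fin n → K) (t : K) {u v : Fin n}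
    (h : (v : ℕ) < (u : ℕ)) : coxMatrix a t u v = -(t⁻¹ * a v u) := by
  have h1 : ¬ u = v := by intro e; subst e; omega
  have h2 : v < u := h
  have h3 : ¬ v = u := by intro e; subst e; omega
  have h4 : ¬ u < v := not_lt.mpr (le_of_lt h2)
  simp [coxMatrix, chainSeifert, h1, h2, h3, h4, smul_eq_mul]

lemma aux_three_term {K : Type*} [Field K] {m : ℕ} (q : K) (hq : q ≠ 0)
    (M : Matrix (Fin (m+2)) (Fin (m+2)) K)
    (h00 : M 0 0 = q + q⁻¹)
    (hrow : ∀ j : Fin (m+1), M 0 j.succ = if j = 0 then -q else 0)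
    (hcol : ∀ j : Fin (m+1), M j.succ 0 = if j = 0 then -q⁻¹ else 0) :
    M.det = (q + q⁻¹) * (M.submatrix Fin.succ Fin.succ).det
      - (M.submatrix (fun x : Fin m => x.succ.succ) (fun x : Fin m => x.succ.succ)).det := by
  have hN : (M.submatrix Fin.succ (Fin.succ 0).succAbove).det
      = -q⁻¹ * (M.submatrix (fun x : Fin m => x.succ.succ) (fun x : Fin m => x.succ.succ)).det := by
    rw [Matrix.det_succ_column_zero, Fin.sum_univ_succ]
    have hsub : ((M.submatrix Fin.succ (Fin.succ 0).succAbove).submatrix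
        Fin.succ Fin.succ)
        = M.submatrix (fun x : Fin m => x.succ.succ) (fun x : Fin m => x.succ.succ) := by
      ext x y
      simp [Matrix.submatrix_apply]
    simp only [Matrix.submatrix_apply, Fin.succ_succAbove_zero, hcol, Fin.succ_ne_zero,
      if_false, if_pos rfl, if_true, mul_zero, zero_mul, Finset.sum_const_zero, add_zero,
      Fin.val_zero, pow_zero, one_mul, Fin.succAbove_zero, hsub]
  rw [Matrix.det_succ_row_zero, Fin.sum_univ_succ, Fin.sum_univ_succ]
  simp only [hrow, Fin.succ_ne_zero, if_false, if_pos rfl, mul_zero, zero_mul,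
    Finset.sum_const_zero, add_zero, h00, Fin.succAbove_zero, Fin.val_zero, pow_zero, one_mul,
    hN, if_true, Fin.val_succ, pow_one]
  field_simp
  ring

lemma chainC_eq {K : Type*} [Field K] {n : ℕ} (a : Fin n → Fin n → K) (t : K)
    (j r : ℕ) (h : n - j = r) (f : Fin r → Fin n) (hf : ∀ x, (f x : ℕ) = j + x) :
    chainC a t j = ((coxMatrix a t).submatrix f f).det := by
  subst h
  unfold chainC
  have : f = fun x : Fin (n - j) => (⟨j + x.val, by have := x.isLt; omega⟩ : Fin n) := by
    funext x; exact Fin.ext (hf x)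
  rw [this]

/-- The three-term recurrence of Example 2: if the first `k` vertices of a weighted
graph form an `A_k`-chain attached to the rest of the graph only at the `k`-th
vertex, then `C_{i-1}(q) - (q + q⁻¹)·C_i(q) + C_{i+1}(q) = 0` for `1 ≤ i ≤ k - 1`,
where `C_i(q)` is the Coxeter polynomial of the induced subgraph obtained by
deleting the first `i` vertices. -/
theorem chain_three_term_recurrence {K : Type*} [Field K] (n k : ℕ)
    (a : Fin n → Fin n → K) (hsym : ∀ i j, a i j = a j i)
    (q : K) (hq : q ≠ 0)
    (hk : 1 ≤ k) (hkn : k ≤ n)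
    (hchain : ∀ i : ℕ, (h : i + 1 < k) →
      a ⟨i, by omega⟩ ⟨i + 1, by omega⟩ = 1)
    (hzero : ∀ i j : ℕ, (hi : i < k) → (hj : j < k) → i < j → j ≠ i + 1 →
      a ⟨i, by omega⟩ ⟨j, by omega⟩ = 0)
    (hcut : ∀ i j : ℕ, (hi : i + 1 < k) → (hj : k ≤ j) → (hjn : j < n) →
      a ⟨i, by omega⟩ ⟨j, by omega⟩ = 0) :
    ∀ i : ℕ, 1 ≤ i → i < k →
      chainC a q (i - 1) - (q + q⁻¹) * chainC a q i + chainC a q (i + 1) = 0 := by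
    -- reformulate the hypotheses in terms of `Fin n` elements
  have hchain' : ∀ u v : Fin n, (v : ℕ) = (u : ℕ) + 1 → (u : ℕ) + 1 < k → a u v = 1 := by
    rintro ⟨u, hu⟩ ⟨v, hv⟩ h1 h2
    simp only at h1
    subst h1
    exact hchain u h2
  have hzero' : ∀ u v : Fin n, (u : ℕ) + 1 < k → (u : ℕ) < (v : ℕ) →
      (v : ℕ) ≠ (u : ℕ) + 1 → a u v = 0 := by
    rintro ⟨u, hu⟩ ⟨v, hv⟩ h1 h2 h3
    simp only at h1 h2 h3
    by_cases hvk : v < k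
    · exact hzero u v (by omega) hvk h2 h3
    · exact hcut u v h1 (by omega) hv
  intro i h1 hik
  obtain ⟨p, rfl⟩ : ∃ p, i = p + 1 := ⟨i - 1, by omega⟩
  have hpk : p + 1 < k := hik
  have hpn : p + 2 ≤ n := by omega
  set m : ℕ := n - (p + 2) with hm
  have hm2 : n - p = m + 2 := by omega
  have hm1 : n - (p + 1) = m + 1 := by omega
  have hm0 : n - (p + 2) = m := by omega
  set M : Matrix (Fin (m + 2)) (Fin (m + 2)) K :=
    (coxMatrix a q).submatrix
      (fun x : Fin (m + 2) => (⟨p + x.val, by have := x.isLt; omega⟩ : Fin n))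
      (fun x : Fin (m + 2) => (⟨p + x.val, by have := x.isLt; omega⟩ : Fin n)) with hM
  have hA : chainC a q p = M.det :=
    chainC_eq a q p (m + 2) hm2 _ (fun x => rfl)
  have hB : chainC a q (p + 1) = (M.submatrix Fin.succ Fin.succ).det := by
    rw [Matrix.submatrix_submatrix]
    exact chainC_eq a q (p + 1) (m + 1) hm1 _ (fun x => by simp [Function.comp]; omega)
  have hC : chainC a q (p + 2)
      = (M.submatrix (fun x : Fin m => x.succ.succ) (fun x : Fin m => x.succ.succ)).det := by
    rw [Matrix.submatrix_submatrix]
    exact chainC_eq a q (p + 2) m hm0 _ (fun x => by simp [Function.comp]; omega)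
  have hdet := aux_three_term q hq M ?h00 ?hrow ?hcol
  case h00 =>
    simp only [hM, Matrix.submatrix_apply, cox_diag]
  case hrow =>
    intro j
    simp only [hM, Matrix.submatrix_apply]
    rw [cox_lt a q (by simp [Fin.lt_def])]
    by_cases hj : j = 0
    · subst hj
      rw [hchain' _ _ (by simp) (by simpa using hpk)]
      simp
    · rw [hzero' _ _ (by simpa using hpk) (by simp) ?_]
      · simp [hj]
      · show ¬(p + ((j : ℕ) + 1) = p + ((0 : Fin (m+2)) : ℕ) + 1)
        simp only [Fin.val_zero]
        intro h
        apply hj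
        have hjv : (j : ℕ) = 0 := by omega
        exact Fin.ext (by simp [hjv])
  case hcol =>
    intro j
    simp only [hM, Matrix.submatrix_apply]
    rw [cox_gt a q (by simp [Fin.lt_def])]
    by_cases hj : j = 0
    · subst hj
      rw [hchain' _ _ (by simp) (by simpa using hpk)]
      simp
    · rw [hzero' _ _ (by simpa using hpk) (by simp) ?_]
      · simp [hj]
      · show ¬(p + ((j : ℕ) + 1) = p + ((0 : Fin (m+2)) : ℕ) + 1)
        simp only [Fin.val_zero]
        intro h
        apply hj
        have hjv : (j : ℕ) = 0 := by omega
        exact Fin.ext (by simp [hjv])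
  rw [show p + 1 - 1 = p from rfl, hA, hB, hC, hdet]
  ring
end

section
/- Let K be a field, q ∈ K nonzero, and let a weighted graph on vertices {1,…,n} have symmetric weights a_{ij} ∈ K such that the underlying simple graph (edges are pairs {i,j} with a_{ij} ≠ 0) contains no cycle (is a forest). Let S be the upper triangular matrix with 1's on the diagonal and −a_{ij} in position (i,j) for i < j, let C = S + Sᵀ, and let A be the weight matrix (A_{ij} = a_{ij} for i ≠ j, A_{ii} = 0, so C = 2I − A). Then the Coxeter polynomial equals the characteristic polynomial of the graph evaluated at z = q + q⁻¹: det(q·S + q⁻¹·Sᵀ) = det((q + q⁻¹)·I − A). -/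
/-!
In the Leibniz expansion of a determinant, a permutation contributes only if every index it moves
is sent along an edge of the support graph; in a forest such a permutation is an involution, since
a longer orbit would trace a cycle. The Coxeter matrix is the entrywise product of
`(q + q⁻¹) • 1 - A` with the matrix `c` equal to `q` above and `q⁻¹` below the diagonal, and along
an involution the factors of `c` cancel in pairs `c i j * c j i = 1`.
-/

open Function

namespace SimpleGraph

variable {V : Type*} {G : SimpleGraph V}

theorem IsAcyclic.minimalPeriod_le_two (hG : G.IsAcyclic) {f : V → V}
    (hf : ∀ x, f x ≠ x → G.Adj x (f x)) (x : V) : minimalPeriod f x ≤ 2 := by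
  by_contra! hk
  set k := minimalPeriod f x
  have : NeZero k := ⟨by omega⟩
  have hinj : Injective fun m : Fin k ↦ f^[m] x := fun u v h ↦
    Fin.ext (iterate_injOn_Iio_minimalPeriod u.2 v.2 h)
  have hstep : ∀ u v : Fin k, (u - v).val = 1 → G.Adj (f^[v] x) (f^[u] x) := by
    intro u v huv
    have hsucc : f^[u] x = f (f^[v] x) := by
      rw [← add_sub_cancel v u, Fin.val_add, huv, iterate_mod_minimalPeriod_eq,
        iterate_succ_apply']
    have hne : u ≠ v := by rintro rfl; simp at huv
    exact hsucc ▸ hf _ (hsucc ▸ hinj.ne hne)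
  -- the orbit `m ↦ f^[m] x` would be a copy of `cycleGraph k` in `G`
  refine isAcyclic_iff_free_cycleGraph.mp hG k hk ⟨⟨⟨fun u ↦ f^[u] x, fun {u v} huv ↦ ?_⟩, hinj⟩⟩
  rcases cycleGraph_adj'.mp huv with h | h
  · exact (hstep u v h).symm
  · exact hstep v u h

theorem IsAcyclic.involutive_of_forall_adj [Finite V] (hG : G.IsAcyclic) {σ : Equiv.Perm V}
    (hσ : ∀ x, σ x ≠ x → G.Adj x (σ x)) : Involutive σ := by
  intro x
  have hpos := minimalPeriod_pos_of_mem_periodicPts (σ.injective.mem_periodicPts x)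
  have hle := hG.minimalPeriod_le_two hσ x
  exact isPeriodicPt_iff_minimalPeriod_dvd.mpr ((Nat.dvd_prime Nat.prime_two).mpr (by omega))

end SimpleGraph

namespace Matrix

open Finset Equiv

variable {n R : Type*} [Fintype n] [DecidableEq n] [CommRing R]

theorem prod_perm_eq_one_of_involutive {c : Matrix n n R} (hc : ∀ i j, i ≠ j → c i j * c j i = 1)
    (hdiag : ∀ i, c i i = 1) {σ : Perm n} (hσ : Involutive σ) : ∏ i, c (σ i) i = 1 := by
  refine prod_involution (fun i _ ↦ σ i) (fun i _ ↦ ?_)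
    (fun i _ hi hfix ↦ hi (by rw [hfix, hdiag])) (fun _ _ ↦ mem_univ _) (fun i _ ↦ hσ i)
  rw [hσ i]
  by_cases hi : σ i = i
  · rw [hi, hdiag, one_mul]
  · exact hc _ _ hi

theorem det_hadamard_eq_det_of_isAcyclic {G : SimpleGraph n} (hG : G.IsAcyclic)
    {c N : Matrix n n R} (hc : ∀ i j, i ≠ j → c i j * c j i = 1) (hdiag : ∀ i, c i i = 1)
    (hN : ∀ i j, i ≠ j → N i j ≠ 0 → G.Adj i j) : (c ⊙ N).det = N.det := by
  simp only [det_apply, hadamard_apply, prod_mul_distrib]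
  refine sum_congr rfl fun σ _ ↦ ?_
  by_cases hzero : ∃ i, N (σ i) i = 0
  · obtain ⟨i, hi⟩ := hzero
    rw [prod_eq_zero (f := fun j ↦ N (σ j) j) (mem_univ i) hi, mul_zero]
  · rw [not_exists] at hzero
    have hσ : Involutive σ := hG.involutive_of_forall_adj fun i hi ↦ (hN _ _ hi (hzero i)).symm
    rw [prod_perm_eq_one_of_involutive hc hdiag hσ, one_mul]

end Matrix

open Matrix Finset

/-- For a weighted graph whose underlying simple graph is a forest (acyclic),
the Coxeter polynomial `det (q • S + q⁻¹ • Sᵀ)` coincides with the characteristic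
polynomial `det (z • I - A)` of the weight matrix `A` evaluated at `z = q + q⁻¹`. -/
theorem coxeter_eq_charpoly_of_forest {K : Type*} [Field K] (n : ℕ)
    (a : Fin n → Fin n → K) (hsym : ∀ i j, a i j = a j i)
    (q : K) (hq : q ≠ 0)
    (G : SimpleGraph (Fin n))
    (hG : ∀ i j, G.Adj i j ↔ i ≠ j ∧ a i j ≠ 0)
    (hforest : G.IsAcyclic)
    (S : Matrix (Fin n) (Fin n) K)
    (hS : ∀ i j, S i j = if i = j then 1 else if i < j then -a i j else 0)
    (A : Matrix (Fin n) (Fin n) K)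
    (hA : ∀ i j, A i j = if i = j then 0 else a i j) :
    (q • S + q⁻¹ • Sᵀ).det = ((q + q⁻¹) • (1 : Matrix (Fin n) (Fin n) K) - A).det := by
  set N := (q + q⁻¹) • (1 : Matrix (Fin n) (Fin n) K) - A
  let c : Matrix (Fin n) (Fin n) K := of fun i j ↦ if i < j then q else if j < i then q⁻¹ else 1
  have hcoxeter : q • S + q⁻¹ • Sᵀ = c ⊙ N := by
    ext i j
    rcases lt_trichotomy i j with h | rfl | h
    · simp [N, c, hS, hA, h, h.ne, h.ne', h.not_gt]
    · simp [N, c, hS, hA]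
    · simp [N, c, hS, hA, h, h.ne, h.ne', h.not_gt, hsym i j]
  have hc : ∀ i j, i ≠ j → c i j * c j i = 1 := by
    intro i j hij
    rcases hij.lt_or_gt with h | h <;> simp [c, h, h.not_gt, hq]
  have hN : ∀ i j, i ≠ j → N i j ≠ 0 → G.Adj i j := fun i j hij hNij ↦
    (hG i j).mpr ⟨hij, by simpa [N, hA, hij] using hNij⟩
  rw [hcoxeter, det_hadamard_eq_det_of_isAcyclic hforest hc (by simp [c]) hN]
end

section
/- Let K be a field, q ∈ K nonzero, and let a weighted graph on vertices {1,…,n} have symmetric weights a_{ij} ∈ K such that for some m with 0 ≤ m ≤ n one has a_{ij} = 0 whenever both i,j ≤ m and whenever both i,j > m (i.e. the graph is bipartite with the two parts numbered consecutively, all vertices of one part having smaller indices than all vertices of the other part). Let S be the upper triangular matrix with 1's on the diagonal and −a_{ij} in position (i,j) for i < j, and let A be the weight matrix (A_{ij} = a_{ij} for i ≠ j, A_{ii} = 0). Then det(q·S + q⁻¹·Sᵀ) = det((q + q⁻¹)·I − A). -/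
/-!
Let `d` be `q` on the first part and `1` on the second. Conjugating by `diagonal d` multiplies
an edge from the first part to the second by `q` and an edge back by `q⁻¹`. Because the first
part precedes the second, these are exactly the edges above and below the diagonal, so
`q • S + q⁻¹ • Sᵀ = diagonal d * ((q + q⁻¹) • 1 - A) * (diagonal d)⁻¹`.
-/

open Matrix Finset

theorem Matrix.det_eq_of_mul_diagonal_eq_diagonal_mul {ι R : Type*} [Fintype ι] [DecidableEq ι]
    [CommRing R] [IsDomain R] {M N : Matrix ι ι R} {d : ι → R} (hd : ∀ i, d i ≠ 0)
    (h : M * diagonal d = diagonal d * N) : M.det = N.det := by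
  have hdet := congrArg det h
  rw [det_mul, det_mul, det_diagonal, mul_comm] at hdet
  exact mul_left_cancel₀ (prod_ne_zero_iff.mpr fun i _ => hd i) hdet

section Bipartite

variable {ι K : Type*} [LinearOrder ι] [Field K] {a : ι → ι → K} {q : K}

theorem smul_add_inv_smul_transpose_apply_of_ne [DecidableEq ι] {S : Matrix ι ι K}
    (hsym : ∀ i j, a i j = a j i)
    (hS : ∀ i j, S i j = if i = j then 1 else if i < j then -a i j else 0)
    {i j : ι} (hij : i ≠ j) :
    (q • S + q⁻¹ • Sᵀ) i j = -((if i < j then q else q⁻¹) * a i j) := by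
  simp only [Matrix.add_apply, Matrix.smul_apply, transpose_apply, hS, if_neg hij,
    if_neg hij.symm, smul_eq_mul, hsym j i]
  rcases hij.lt_or_gt with h | h <;> simp [h, h.not_gt]

theorem ite_lt_mul_mul_ite_eq_ite_mul {p : ι → Prop} [DecidablePred p] (hp : Antitone p)
    (hq : q ≠ 0) (hbip : ∀ i j, i ≠ j → (p i ↔ p j) → a i j = 0) {i j : ι} (hij : i ≠ j) :
    (if i < j then q else q⁻¹) * a i j * (if p j then q else 1)
      = (if p i then q else 1) * a i j := by
  by_cases hpij : p i ↔ p j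
  · simp [hbip i j hij hpij]
  by_cases hpi : p i
  · have hpj : ¬p j := fun hpj => hpij (iff_of_true hpi hpj)
    have hlt : i < j := lt_of_not_ge fun hji => hpj (hp hji hpi)
    simp [hpi, hpj, hlt]
  · have hpj : p j := by tauto
    have hlt : j < i := lt_of_not_ge fun hij => hpi (hp hij hpj)
    simp only [hpi, hpj, hlt.not_gt, if_false, if_true]
    field_simp

theorem smul_add_inv_smul_transpose_mul_diagonal_eq [Fintype ι] [DecidableEq ι] {p : ι → Prop}
    [DecidablePred p] (hp : Antitone p) (hq : q ≠ 0) (hsym : ∀ i j, a i j = a j i)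
    (hbip : ∀ i j, i ≠ j → (p i ↔ p j) → a i j = 0) {S A : Matrix ι ι K}
    (hS : ∀ i j, S i j = if i = j then 1 else if i < j then -a i j else 0)
    (hA : ∀ i j, A i j = if i = j then 0 else a i j) :
    (q • S + q⁻¹ • Sᵀ) * diagonal (fun i => if p i then q else 1)
      = diagonal (fun i => if p i then q else 1) * ((q + q⁻¹) • 1 - A) := by
  ext i j
  rw [mul_diagonal, diagonal_mul]
  by_cases hij : i = j
  · subst hij
    simp [hS, hA, mul_comm]
  · rw [smul_add_inv_smul_transpose_apply_of_ne hsym hS hij, Matrix.sub_apply,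
      Matrix.smul_apply, one_apply_ne hij, hA, if_neg hij, neg_mul,
      ite_lt_mul_mul_ite_eq_ite_mul hp hq hbip hij]
    simp

end Bipartite

theorem coxeter_eq_charpoly_of_bipartite_general {K : Type*} [Field K] (n : ℕ)
    (a : Fin n → Fin n → K) (hsym : ∀ i j, a i j = a j i)
    (q : K) (hq : q ≠ 0)
    (m : ℕ)
    (hbip : ∀ i j : Fin n, i ≠ j →
      ((i.val < m ∧ j.val < m) ∨ (m ≤ i.val ∧ m ≤ j.val)) → a i j = 0)
    (S : Matrix (Fin n) (Fin n) K)
    (hS : ∀ i j, S i j = if i = j then 1 else if i < j then -a i j else 0)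
    (A : Matrix (Fin n) (Fin n) K)
    (hA : ∀ i j, A i j = if i = j then 0 else a i j) :
    (q • S + q⁻¹ • Sᵀ).det = ((q + q⁻¹) • (1 : Matrix (Fin n) (Fin n) K) - A).det := by
  have hp : Antitone fun i : Fin n => i.val < m := fun _ _ hij hj => lt_of_le_of_lt hij hj
  have hbip' : ∀ i j : Fin n, i ≠ j → (i.val < m ↔ j.val < m) → a i j = 0 := fun i j hij h =>
    hbip i j hij (by omega)
  refine det_eq_of_mul_diagonal_eq_diagonal_mul (fun i => ?_)
    (smul_add_inv_smul_transpose_mul_diagonal_eq hp hq hsym hbip' hS hA)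
  split_ifs <;> simp [hq]

/-- For a bipartite weighted graph whose two parts are numbered consecutively
(the first part consisting of the vertices with index `< m` and the second of the
vertices with index `≥ m`, with no edges inside either part), the Coxeter polynomial
`det (q • S + q⁻¹ • Sᵀ)` coincides with the characteristic polynomial
`det (z • I - A)` of the weight matrix `A` evaluated at `z = q + q⁻¹`. -/
theorem coxeter_eq_charpoly_of_bipartite {K : Type*} [Field K] (n : ℕ)
    (a : Fin n → Fin n → K) (hsym : ∀ i j, a i j = a j i)
    (q : K) (hq : q ≠ 0)
    (m : ℕ) (hm : m ≤ n)
    (hbip : ∀ i j : Fin n, i ≠ j →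
      ((i.val < m ∧ j.val < m) ∨ (m ≤ i.val ∧ m ≤ j.val)) → a i j = 0)
    (S : Matrix (Fin n) (Fin n) K)
    (hS : ∀ i j, S i j = if i = j then 1 else if i < j then -a i j else 0)
    (A : Matrix (Fin n) (Fin n) K)
    (hA : ∀ i j, A i j = if i = j then 0 else a i j) :
    (q • S + q⁻¹ • Sᵀ).det = ((q + q⁻¹) • (1 : Matrix (Fin n) (Fin n) K) - A).det :=
  coxeter_eq_charpoly_of_bipartite_general n a hsym q hq m hbip S hS A hA
end

section
/- Let K be a field, m ≥ 1, and let A be the adjacency matrix of the cycle graph on 2m+1 vertices (A_{ij} = 1 if vertices i and j are adjacent on the cycle, 0 otherwise). Then for every nonzero q ∈ K: det((q + q⁻¹)·I − A) = q^{−(2m+1)}·(q^{2m+1} − 1)². -/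
open Matrix

/-!
Write `P` for the permutation matrix of the rotation `i ↦ i + 1` of `Fin n`. For `n ≥ 3` the
adjacency matrix of the `n`-cycle is `P + Pᵀ`, and since `P Pᵀ = 1`,
`(q + q⁻¹) • 1 - (P + Pᵀ) = (q • 1 - P) * (1 - q⁻¹ • Pᵀ)`, whose second factor is `q⁻¹` times the
transpose of the first. Finally `det (q • 1 - P) = qⁿ - 1`: expanding along the first column, only
the first and the last row contribute, and both minors are triangular.
-/

theorem val_finRotate {n : ℕ} (i : Fin n) : (finRotate n i : ℕ) = (i + 1) % n := by
  rcases n with _ | n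
  · exact i.elim0
  rw [coe_finRotate]
  split_ifs with h
  · simp [h]
  · rw [Nat.mod_eq_of_lt (Nat.succ_lt_succ (Fin.val_lt_last h))]

theorem finRotate_apply_eq_iff_val {n : ℕ} (i j : Fin (n + 1)) :
    finRotate (n + 1) i = j ↔ (i : ℕ) + 1 = j ∨ (i : ℕ) = n ∧ (j : ℕ) = 0 := by
  rw [Fin.ext_iff, coe_finRotate]
  have := j.is_lt
  split_ifs with h <;> rw [Fin.ext_iff, Fin.val_last] at h <;> omega

theorem finRotate_finRotate_apply_ne {n : ℕ} (hn : 3 ≤ n) (i : Fin n) :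
    finRotate n (finRotate n i) ≠ i := by
  obtain ⟨n, rfl⟩ : ∃ k, n = k + 1 := ⟨n - 1, by omega⟩
  intro h
  have h₁ := (finRotate_apply_eq_iff_val i _).mp rfl
  have h₂ := (finRotate_apply_eq_iff_val _ i).mp h
  have := (finRotate (n + 1) i).is_lt
  omega

theorem det_smul_one_sub_permMatrix_finRotate {R : Type*} [CommRing R] (n : ℕ) (q : R) :
    det (q • 1 - (finRotate (n + 1)).permMatrix R) = q ^ (n + 1) - 1 := by
  rcases n with _ | n
  · simp [finRotate_one]
  set M := q • 1 - (finRotate (n + 2)).permMatrix R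
  have hM : ∀ i j, M i j = (if (i : ℕ) = j then q else 0) -
      if (i : ℕ) + 1 = j ∨ (i : ℕ) = n + 1 ∧ (j : ℕ) = 0 then 1 else 0 := by
    intro i j
    simp only [M, Matrix.sub_apply, Matrix.smul_apply, one_apply, PEquiv.toMatrix_apply,
      Equiv.toPEquiv_apply, Option.mem_def, Option.some.injEq, finRotate_apply_eq_iff_val,
      smul_eq_mul, mul_ite, mul_one, mul_zero]
    simp only [Fin.ext_iff]
  have hfirst : (M.submatrix Fin.succ Fin.succ).det = q ^ (n + 1) := by
    rw [det_of_isUpperTriangular]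
    · simp [hM]
    · intro i j (hij : (j : ℕ) < i)
      simp only [submatrix_apply, hM, Fin.val_succ]
      rw [if_neg (by omega), if_neg (by omega), sub_zero]
  have hlast : (M.submatrix Fin.castSucc Fin.succ).det = (-1) ^ (n + 1) := by
    rw [det_of_isLowerTriangular]
    · simp [hM]
    · intro i j (hij : (i : ℕ) < j)
      simp only [submatrix_apply, hM, Fin.val_succ, Fin.val_castSucc]
      rw [if_neg (by omega), if_neg (by omega), sub_zero]
  rw [det_succ_column_zero, Fintype.sum_eq_add 0 (Fin.last _) (by simp [Fin.ext_iff])]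
  · simp [hM, hfirst, hlast, ← mul_pow]
    ring
  · rintro i ⟨hi0, hilast⟩
    have hi0' : (i : ℕ) ≠ 0 := Fin.val_ne_of_ne hi0
    have hilast' : (i : ℕ) ≠ n + 1 := Fin.val_ne_of_ne hilast
    simp [hM, hi0', hilast']

theorem permMatrix_add_transpose_finRotate {R : Type*} [AddMonoidWithOne R] {n : ℕ}
    (hn : 3 ≤ n) :
    (finRotate n).permMatrix R + ((finRotate n).permMatrix R)ᵀ =
      of fun i j => if finRotate n i = j ∨ finRotate n j = i then 1 else 0 := by
  ext i j
  simp only [Matrix.add_apply, transpose_apply, of_apply, PEquiv.toMatrix_apply,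
    Equiv.toPEquiv_apply, Option.mem_some_iff]
  have hnot : ¬(finRotate n i = j ∧ finRotate n j = i) := fun ⟨hij, hji⟩ ↦
    finRotate_finRotate_apply_ne hn i (hij ▸ hji)
  split_ifs <;> simp_all

theorem permMatrix_mul_transpose {R n : Type*} [NonAssocSemiring R] [Fintype n] [DecidableEq n]
    (σ : Equiv.Perm n) : σ.permMatrix R * (σ.permMatrix R)ᵀ = 1 := by
  rw [transpose_permMatrix, ← permMatrix_mul, inv_mul_cancel, permMatrix_one]

theorem add_inv_smul_one_sub_add_eq_mul {K n : Type*} [Field K] [Fintype n] [DecidableEq n]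
    {P Q : Matrix n n K} (hPQ : P * Q = 1) {q : K} (hq : q ≠ 0) :
    (q + q⁻¹) • (1 : Matrix n n K) - (P + Q) = (q • 1 - P) * (1 - q⁻¹ • Q) := by
  simp only [Matrix.sub_mul, Matrix.mul_sub, Matrix.mul_smul, Matrix.smul_mul, hPQ,
    Matrix.mul_one, Matrix.one_mul]
  match_scalars <;> field_simp
  ring

theorem det_add_inv_smul_one_sub_add_transpose {K n : Type*} [Field K] [Fintype n]
    [DecidableEq n] {P : Matrix n n K} (hP : P * Pᵀ = 1) {q : K} (hq : q ≠ 0) :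
    det ((q + q⁻¹) • 1 - (P + Pᵀ)) = q⁻¹ ^ Fintype.card n * det (q • 1 - P) ^ 2 := by
  have hT : 1 - q⁻¹ • Pᵀ = q⁻¹ • (q • 1 - P)ᵀ := by
    rw [transpose_sub, transpose_smul, transpose_one, smul_sub, smul_smul, inv_mul_cancel₀ hq,
      one_smul]
  rw [add_inv_smul_one_sub_add_eq_mul hP hq, det_mul, hT, det_smul, det_transpose]
  ring

/-- Evaluation of the characteristic polynomial of the odd cycle graph `Ã_{2m}`
(on `2m + 1` vertices) at `z = q + q⁻¹`:
`det ((q + q⁻¹) • I - A) = q^{-(2m+1)} · (q^{2m+1} - 1)²`. -/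
theorem cycle_charpoly_eval {K : Type*} [Field K] (m : ℕ) (hm : 1 ≤ m)
    (A : Matrix (Fin (2 * m + 1)) (Fin (2 * m + 1)) K)
    (hA : ∀ i j, A i j =
      if (i.val + 1) % (2 * m + 1) = j.val ∨ (j.val + 1) % (2 * m + 1) = i.val
      then 1 else 0)
    (q : K) (hq : q ≠ 0) :
    ((q + q⁻¹) • (1 : Matrix (Fin (2 * m + 1)) (Fin (2 * m + 1)) K) - A).det
      = (q⁻¹) ^ (2 * m + 1) * (q ^ (2 * m + 1) - 1) ^ 2 := by
  set P := (finRotate (2 * m + 1)).permMatrix K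
  have hAP : A = P + Pᵀ := by
    rw [permMatrix_add_transpose_finRotate (by omega)]
    ext i j
    simp only [hA, of_apply, Fin.ext_iff, val_finRotate]
  rw [hAP, det_add_inv_smul_one_sub_add_transpose (permMatrix_mul_transpose _) hq,
    det_smul_one_sub_permMatrix_finRotate, Fintype.card_fin]
end

section
/- Let K be a field, n ≥ 1, and let A be a symmetric n×n matrix over K with rows and columns indexed by {0, 1, …, n−1}. For nonzero t ∈ K define D(t) = det((t + t⁻¹)·I − A) and h_k(t) = (adj((t + t⁻¹)·I − A))_{0k} for 0 ≤ k ≤ n−1. Then for all nonzero x, y ∈ K: D(x)·h₀(y) − D(y)·h₀(x) = (x + x⁻¹ − y − y⁻¹)·Σ_{k=0}^{n−1} h_k(x)·h_k(y). -/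
open Matrix Finset

namespace Matrix

variable {ι R : Type*} [Fintype ι] [DecidableEq ι] [CommRing R]

/-- The resolvent identity `R(a) - R(b) = (b - a) R(a) R(b)` for `R(t) = (t - A)⁻¹`,
cleared of denominators so that it holds for the adjugates over any commutative ring. -/
theorem sub_smul_adjugate_mul_adjugate (A : Matrix ι ι R) (a b : R) :
    (a - b) • ((a • 1 - A).adjugate * (b • 1 - A).adjugate)
      = (a • 1 - A).det • (b • 1 - A).adjugate - (b • 1 - A).det • (a • 1 - A).adjugate := by
  set Ma : Matrix ι ι R := a • 1 - A
  set Mb : Matrix ι ι R := b • 1 - A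
  have hdiff : Ma - Mb = (a - b) • (1 : Matrix ι ι R) := by
    simp only [Ma, Mb, sub_smul]; abel
  calc (a - b) • (Ma.adjugate * Mb.adjugate)
      = Ma.adjugate * ((Ma - Mb) * Mb.adjugate) := by
        rw [hdiff, smul_mul, Matrix.one_mul, Matrix.mul_smul]
    _ = Ma.adjugate * Ma * Mb.adjugate - Ma.adjugate * (Mb * Mb.adjugate) := by
        rw [Matrix.sub_mul, Matrix.mul_sub, Matrix.mul_assoc]
    _ = Ma.det • Mb.adjugate - Mb.det • Ma.adjugate := by
        rw [adjugate_mul, mul_adjugate, smul_mul, Matrix.one_mul, Matrix.mul_smul, Matrix.mul_one]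

theorem IsSymm.sub_mul_sum_adjugate_mul_adjugate {A : Matrix ι ι R} (hA : A.IsSymm)
    (a b : R) (i : ι) :
    (a - b) * ∑ k, (a • 1 - A).adjugate i k * (b • 1 - A).adjugate i k
      = (a • 1 - A).det * (b • 1 - A).adjugate i i
        - (b • 1 - A).det * (a • 1 - A).adjugate i i := by
  have hsymm : (b • 1 - A).adjugate.IsSymm := ((isSymm_one.smul b).sub hA).adjugate
  have hii := congrFun (congrFun (sub_smul_adjugate_mul_adjugate A a b) i) i
  simp only [smul_apply, sub_apply, smul_eq_mul, mul_apply] at hii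
  rw [← hii]
  congr 1
  exact sum_congr rfl fun k _ => by rw [hsymm.apply i k]

end Matrix

theorem symmetric_christoffel_darboux_general {K : Type*} [Field K] (n : ℕ)
    (A : Matrix (Fin (n + 1)) (Fin (n + 1)) K) (hsymm : Aᵀ = A)
    (D : K → K)
    (hD : ∀ t, D t = ((t + t⁻¹) • (1 : Matrix (Fin (n + 1)) (Fin (n + 1)) K) - A).det)
    (h : K → Fin (n + 1) → K)
    (hh : ∀ t k, h t k =
      ((t + t⁻¹) • (1 : Matrix (Fin (n + 1)) (Fin (n + 1)) K) - A).adjugate 0 k)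
    (x y : K) :
    D x * h y 0 - D y * h x 0
      = (x + x⁻¹ - y - y⁻¹) * ∑ k : Fin (n + 1), h x k * h y k := by
  simp only [hD, hh]
  rw [← IsSymm.sub_mul_sum_adjugate_mul_adjugate hsymm]
  ring

/-- The Christoffel–Darboux identity (18) of Proposition 2, in cofactor form for a
symmetric matrix `A` on `n + 1` indices (index `0` distinguished):
with `D t = det((t + t⁻¹)·I - A)` and `h t k = adj((t + t⁻¹)·I - A)_{0k}`,
`D(x)·h₀(y) - D(y)·h₀(x) = (x + x⁻¹ - y - y⁻¹)·Σ_k h_k(x)·h_k(y)`. -/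
theorem symmetric_christoffel_darboux {K : Type*} [Field K] (n : ℕ)
    (A : Matrix (Fin (n + 1)) (Fin (n + 1)) K) (hsymm : Aᵀ = A)
    (D : K → K)
    (hD : ∀ t, D t = ((t + t⁻¹) • (1 : Matrix (Fin (n + 1)) (Fin (n + 1)) K) - A).det)
    (h : K → Fin (n + 1) → K)
    (hh : ∀ t k, h t k =
      ((t + t⁻¹) • (1 : Matrix (Fin (n + 1)) (Fin (n + 1)) K) - A).adjugate 0 k)
    (x y : K) (hx : x ≠ 0) (hy : y ≠ 0) :
    D x * h y 0 - D y * h x 0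
      = (x + x⁻¹ - y - y⁻¹) * ∑ k : Fin (n + 1), h x k * h y k :=
  symmetric_christoffel_darboux_general n A hsymm D hD h hh x y
end

section
/- Let A be a symmetric real n×n matrix with rows and columns indexed by {0, 1, …, n−1}. For real t ≠ 0 define D(t) = det((t + t⁻¹)·I − A) and h_k(t) = (adj((t + t⁻¹)·I − A))_{0k}. Then for every real x ≠ 0, with ' denoting the derivative with respect to x: D'(x)·h₀(x) − D(x)·h₀'(x) = (1 − x⁻²)·Σ_{k=0}^{n−1} h_k(x)². -/
/-! Put `M = X • 1 - A`, so that `M' = 1`. Differentiating `adj M * M = det M • 1` and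
multiplying by `adj M` on the right gives `det M • (adj M)' + (adj M)² = (det M)' • adj M`.
For symmetric `A` the adjugate is symmetric, so the `(0, 0)` entry of `(adj M)²` is
`Σ_k (adj M)_{0k}²`. Evaluating at `z = x + x⁻¹`, with `dz/dx = 1 - x⁻²`, gives the
identity. -/

open Matrix Finset Polynomial

namespace Matrix

variable {R : Type*} [CommRing R] {m n o : Type*} [Fintype n]

lemma map_derivative_mul (P : Matrix m n R[X]) (Q : Matrix n o R[X]) :
    (P * Q).map derivative = P.map derivative * Q + P * Q.map derivative := by
  ext i j
  simp only [map_apply, mul_apply, add_apply, derivative_sum, derivative_mul, sum_add_distrib]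

variable [DecidableEq n]

lemma charmatrix_map_derivative (A : Matrix n n R) : (charmatrix A).map derivative = 1 := by
  ext i j
  rcases eq_or_ne i j with rfl | hij <;> simp [*]

lemma charmatrix_map_eval (A : Matrix n n R) (t : R) :
    (charmatrix A).map (eval t) = t • (1 : Matrix n n R) - A := by
  ext i j
  rcases eq_or_ne i j with rfl | hij <;> simp [*]

lemma eval_det_charmatrix (A : Matrix n n R) (t : R) :
    (charmatrix A).det.eval t = (t • (1 : Matrix n n R) - A).det := by
  rw [← charmatrix_map_eval, ← coe_evalRingHom, RingHom.map_det]
  rfl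

lemma eval_adjugate_charmatrix (A : Matrix n n R) (t : R) (i j : n) :
    ((charmatrix A).adjugate i j).eval t = (t • (1 : Matrix n n R) - A).adjugate i j := by
  rw [← charmatrix_map_eval, ← coe_evalRingHom, ← RingHom.mapMatrix_apply,
    ← RingHom.map_adjugate]
  rfl

lemma IsSymm.charmatrix {A : Matrix n n R} (hA : A.IsSymm) : (charmatrix A).IsSymm := by
  rw [IsSymm, ← charmatrix_transpose, hA.eq]

lemma det_smul_derivative_adjugate_of_map_derivative_eq_one {M : Matrix n n R[X]}
    (hM : M.map derivative = 1) :
    M.det • M.adjugate.map derivative + M.adjugate * M.adjugate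
      = derivative M.det • M.adjugate := by
  have hdiff : M.adjugate.map derivative * M + M.adjugate
      = derivative M.det • (1 : Matrix n n R[X]) := by
    have := congrArg (map · derivative) (adjugate_mul M)
    simp only [map_derivative_mul, hM, Matrix.mul_one] at this
    rw [this]
    ext i j
    rcases eq_or_ne i j with rfl | hij <;> simp [*]
  calc M.det • M.adjugate.map derivative + M.adjugate * M.adjugate
      = (M.adjugate.map derivative * M + M.adjugate) * M.adjugate := by
        rw [Matrix.add_mul, Matrix.mul_assoc, mul_adjugate, Matrix.mul_smul, Matrix.mul_one]
    _ = derivative M.det • M.adjugate := by rw [hdiff, Matrix.smul_mul, Matrix.one_mul]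

lemma IsSymm.det_mul_derivative_adjugate_charmatrix {A : Matrix n n R} (hA : A.IsSymm) (i : n) :
    (Matrix.charmatrix A).det * derivative ((Matrix.charmatrix A).adjugate i i)
        + ∑ k, (Matrix.charmatrix A).adjugate i k ^ 2
      = derivative (Matrix.charmatrix A).det * (Matrix.charmatrix A).adjugate i i := by
  have hadj := hA.charmatrix.adjugate
  have := congrFun (congrFun
    (det_smul_derivative_adjugate_of_map_derivative_eq_one (charmatrix_map_derivative A)) i) i
  simp only [add_apply, smul_apply, mul_apply, map_apply, smul_eq_mul] at this
  rw [← this]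
  congr 1
  exact sum_congr rfl fun k _ => by rw [sq, hadj.apply k i]

end Matrix

lemma Polynomial.hasDerivAt_eval_add_inv (q : ℝ[X]) {x : ℝ} (hx : x ≠ 0) :
    HasDerivAt (fun t => q.eval (t + t⁻¹))
      (q.derivative.eval (x + x⁻¹) * (1 - x⁻¹ ^ 2)) x := by
  have h := (hasDerivAt_id x).add (hasDerivAt_inv hx)
  rw [← inv_pow, ← sub_eq_add_neg] at h
  exact (q.hasDerivAt _).comp x h

/-- The Wronskian identity (19) of Proposition 2, in cofactor form for a symmetric
real matrix `A` on `n + 1` indices (index `0` distinguished): with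
`D t = det((t + t⁻¹)·I - A)` and `h t k = adj((t + t⁻¹)·I - A)_{0k}`, for `x ≠ 0`,
`D'(x)·h₀(x) - D(x)·h₀'(x) = (1 - x⁻²)·Σ_k h_k(x)²`. -/
theorem symmetric_wronskian_identity (n : ℕ)
    (A : Matrix (Fin (n + 1)) (Fin (n + 1)) ℝ) (hsymm : Aᵀ = A)
    (D : ℝ → ℝ)
    (hD : ∀ t, D t = ((t + t⁻¹) • (1 : Matrix (Fin (n + 1)) (Fin (n + 1)) ℝ) - A).det)
    (h : ℝ → Fin (n + 1) → ℝ)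
    (hh : ∀ t k, h t k =
      ((t + t⁻¹) • (1 : Matrix (Fin (n + 1)) (Fin (n + 1)) ℝ) - A).adjugate 0 k)
    (x : ℝ) (hx : x ≠ 0) :
    deriv D x * h x 0 - D x * deriv (fun t => h t 0) x
      = (1 - (x⁻¹) ^ 2) * ∑ k : Fin (n + 1), (h x k) ^ 2 := by
  set p := (charmatrix A).det
  set B := (charmatrix A).adjugate
  have hDp : D = fun t => p.eval (t + t⁻¹) := funext fun t => by rw [hD, eval_det_charmatrix]
  have hhB : h = fun t k => (B 0 k).eval (t + t⁻¹) := by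
    ext t k
    rw [hh, eval_adjugate_charmatrix]
  have key := congrArg (eval (x + x⁻¹)) (IsSymm.det_mul_derivative_adjugate_charmatrix hsymm 0)
  simp only [eval_add, eval_mul, eval_finsetSum, eval_pow] at key
  subst hDp hhB
  rw [(p.hasDerivAt_eval_add_inv hx).deriv, ((B 0 0).hasDerivAt_eval_add_inv hx).deriv]
  linear_combination (-(1 - x⁻¹ ^ 2)) * key
end

section
/- Let K be a field, let A be an n₁×n₂ matrix, B an n₂×n₃ matrix, and C an n₁×n₃ matrix over K satisfying A·B = 2·C. Let q ∈ K be nonzero, set z = q + q⁻¹, and assume z ≠ 0 and that the matrices z·E − z⁻¹·A·Aᵀ (size n₁) and z·E − z⁻¹·Bᵀ·B (size n₃) are invertible. Let M be the (n₁+n₂+n₃)×(n₁+n₂+n₃) block matrix M = [[z·E, −q·A, q·C], [−q⁻¹·Aᵀ, z·E, −q·B], [q⁻¹·Cᵀ, −q⁻¹·Bᵀ, z·E]]. Then det M = z^{n₂} · det(z·E − z⁻¹·A·Aᵀ) · det(z·E − z⁻¹·Bᵀ·B) · det(E − (4·z⁻² − 1)·Cᵀ·(z·E − z⁻¹·A·Aᵀ)⁻¹·C·(z·E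 − z⁻¹·Bᵀ·B)⁻¹). -/
/-!
Move the middle block row and column of `M` to the end. The corresponding diagonal block `z • 1`
is scalar, and by `A * B = 2 • C` the Schur complement with respect to it is a `2 × 2` block matrix
`[[P, α • C], [β • Cᵀ, Q]]` with `P = z • 1 - z⁻¹ • (A * Aᵀ)`, `Q = z • 1 - z⁻¹ • (Bᵀ * B)`.
A second Schur complement, now with respect to `P`, followed by factoring `Q` out on the right,
gives the formula, because `β * α = 4 * z⁻¹ ^ 2 - 1` when `z = q + q⁻¹`.
-/

open Matrix

namespace Matrix

variable {m n p R : Type*} [Fintype m] [Fintype n] [Fintype p]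
  [DecidableEq m] [DecidableEq n] [DecidableEq p] [CommRing R]

theorem det_fromBlocks_fromBlocks_swap₂₃
    (X₁₁ : Matrix m m R) (X₁₂ : Matrix m n R) (X₁₃ : Matrix m p R)
    (X₂₁ : Matrix n m R) (X₂₂ : Matrix n n R) (X₂₃ : Matrix n p R)
    (X₃₁ : Matrix p m R) (X₃₂ : Matrix p n R) (X₃₃ : Matrix p p R) :
    (fromBlocks (fromBlocks X₁₁ X₁₂ X₂₁ X₂₂) (fromRows X₁₃ X₂₃) (fromCols X₃₁ X₃₂) X₃₃).det =
      (fromBlocks (fromBlocks X₁₁ X₁₃ X₃₁ X₃₃) (fromRows X₁₂ X₃₂) (fromCols X₂₁ X₂₃) X₂₂).det := by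
  let e : (m ⊕ p) ⊕ n ≃ (m ⊕ n) ⊕ p :=
    (Equiv.sumAssoc m p n).trans
      ((Equiv.sumCongr (Equiv.refl m) (Equiv.sumComm p n)).trans (Equiv.sumAssoc m n p).symm)
  rw [← det_submatrix_equiv_self e]
  congr 1
  ext ((i | i) | i) ((j | j) | j) <;> rfl

theorem det_sub_eq_det_one_sub_mul_inv_mul_det {Q : Matrix n n R} (hQ : IsUnit Q)
    (X : Matrix n n R) : (Q - X).det = (1 - X * Q⁻¹).det * Q.det := by
  rw [← det_mul, Matrix.sub_mul, Matrix.one_mul,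
    Matrix.mul_assoc, nonsing_inv_mul Q ((isUnit_iff_isUnit_det Q).mp hQ), Matrix.mul_one]

theorem det_fromBlocks_smul_of_isUnit {P : Matrix m m R} {Q : Matrix n n R}
    (hP : IsUnit P) (hQ : IsUnit Q) (a b : R) (B : Matrix m n R) (C : Matrix n m R) :
    (fromBlocks P (a • B) (b • C) Q).det =
      P.det * Q.det * (1 - (b * a) • (C * P⁻¹ * B * Q⁻¹)).det := by
  let := hP.invertible
  rw [det_fromBlocks₁₁, invOf_eq_nonsing_inv, det_sub_eq_det_one_sub_mul_inv_mul_det hQ,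
    Matrix.smul_mul, Matrix.smul_mul, Matrix.mul_smul, smul_smul, Matrix.smul_mul]
  ring

theorem det_fromBlocks_smul_one₂₂ {K : Type*} [Field K] {z : K} (hz : z ≠ 0)
    (A : Matrix m m K) (B : Matrix m n K) (C : Matrix n m K) :
    (fromBlocks A B C (z • (1 : Matrix n n K))).det =
      z ^ Fintype.card n * (A - z⁻¹ • (B * C)).det := by
  have hinv : z • (1 : Matrix n n K) * z⁻¹ • 1 = 1 := by simp [smul_smul, hz]
  let : Invertible (z • (1 : Matrix n n K)) := ⟨z⁻¹ • 1, by simp [smul_smul, hz], hinv⟩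
  rw [det_fromBlocks₂₂, invOf_eq_right_inv hinv, det_smul, det_one, mul_one,
    Matrix.mul_smul, Matrix.mul_one, Matrix.smul_mul]

end Matrix

theorem fromRows_mul_fromCols_of_mul_eq_two_smul {n₁ n₂ n₃ K : Type*} [Fintype n₂] [Field K]
    {A : Matrix n₁ n₂ K} {B : Matrix n₂ n₃ K} {C : Matrix n₁ n₃ K} (hABC : A * B = (2 : K) • C)
    {q : K} (hq : q ≠ 0) :
    fromRows (-(q • A)) (-(q⁻¹ • Bᵀ)) * fromCols (-(q⁻¹ • Aᵀ)) (-(q • B)) =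
      fromBlocks (A * Aᵀ) ((2 * q ^ 2) • C) ((2 * q⁻¹ ^ 2) • Cᵀ) (Bᵀ * B) := by
  have hBA : Bᵀ * Aᵀ = (2 : K) • Cᵀ := by rw [← transpose_mul, hABC, transpose_smul]
  simp only [fromRows_mul_fromCols, Matrix.neg_mul, Matrix.mul_neg, smul_neg, neg_neg,
    Matrix.smul_mul, Matrix.mul_smul, smul_smul, hABC, hBA, inv_mul_cancel₀ hq,
    mul_inv_cancel₀ hq, one_smul]
  congr 2 <;> ring

/-- The factorization formula of Example 8.  `M` is the block matrix
`[[z·E, -q·A, q·C], [-q⁻¹·Aᵀ, z·E, -q·B], [q⁻¹·Cᵀ, -q⁻¹·Bᵀ, z·E]]` built from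
matrices satisfying the Gusein-Zade relation `A·B = 2·C`, with `z = q + q⁻¹ ≠ 0`
and both `z·E - z⁻¹·A·Aᵀ` and `z·E - z⁻¹·Bᵀ·B` invertible.  Then
`det M = z^{n₂} · det(z·E - z⁻¹·A·Aᵀ) · det(z·E - z⁻¹·Bᵀ·B)
  · det(E - (4·z⁻² - 1)·Cᵀ·(z·E - z⁻¹·A·Aᵀ)⁻¹·C·(z·E - z⁻¹·Bᵀ·B)⁻¹)`. -/
theorem guseinZade_factorization {K : Type*} [Field K]
    (n₁ n₂ n₃ : ℕ)
    (A : Matrix (Fin n₁) (Fin n₂) K)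
    (B : Matrix (Fin n₂) (Fin n₃) K)
    (C : Matrix (Fin n₁) (Fin n₃) K)
    (hABC : A * B = (2 : K) • C)
    (q : K) (hq : q ≠ 0) (z : K) (hz : z = q + q⁻¹) (hz0 : z ≠ 0)
    (hinv₁ : IsUnit (z • (1 : Matrix (Fin n₁) (Fin n₁) K) - z⁻¹ • (A * Aᵀ)))
    (hinv₃ : IsUnit (z • (1 : Matrix (Fin n₃) (Fin n₃) K) - z⁻¹ • (Bᵀ * B)))
    (M : Matrix ((Fin n₁ ⊕ Fin n₂) ⊕ Fin n₃) ((Fin n₁ ⊕ Fin n₂) ⊕ Fin n₃) K)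
    (hM : M = Matrix.fromBlocks
      (Matrix.fromBlocks (z • (1 : Matrix (Fin n₁) (Fin n₁) K)) (-(q • A))
        (-(q⁻¹ • Aᵀ)) (z • (1 : Matrix (Fin n₂) (Fin n₂) K)))
      (Matrix.fromRows (q • C) (-(q • B)))
      (Matrix.fromCols (q⁻¹ • Cᵀ) (-(q⁻¹ • Bᵀ)))
      (z • (1 : Matrix (Fin n₃) (Fin n₃) K))) :
    M.det = z ^ n₂
      * (z • (1 : Matrix (Fin n₁) (Fin n₁) K) - z⁻¹ • (A * Aᵀ)).det
      * (z • (1 : Matrix (Fin n₃) (Fin n₃) K) - z⁻¹ • (Bᵀ * B)).det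
      * ((1 : Matrix (Fin n₃) (Fin n₃) K)
          - (4 * (z⁻¹) ^ 2 - 1) •
            (Cᵀ * (z • (1 : Matrix (Fin n₁) (Fin n₁) K) - z⁻¹ • (A * Aᵀ))⁻¹ * C *
              (z • (1 : Matrix (Fin n₃) (Fin n₃) K) - z⁻¹ • (Bᵀ * B))⁻¹)).det := by
  subst hM
  -- the coefficients are `(1 - q⁻¹ ^ 2) / z` and `(1 - q ^ 2) / z`; their product is `4 / z ^ 2 - 1`
  have hcoeff : (q⁻¹ - z⁻¹ * (2 * q⁻¹ ^ 2)) * (q - z⁻¹ * (2 * q ^ 2)) = 4 * z⁻¹ ^ 2 - 1 := by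
    have hzq : z * q = q ^ 2 + 1 := by rw [hz]; field_simp
    field_simp
    linear_combination 2 * z * hzq
  have hblocks : fromBlocks (z • (1 : Matrix (Fin n₁) (Fin n₁) K)) (q • C) (q⁻¹ • Cᵀ)
        (z • (1 : Matrix (Fin n₃) (Fin n₃) K)) -
      z⁻¹ • fromBlocks (A * Aᵀ) ((2 * q ^ 2) • C) ((2 * q⁻¹ ^ 2) • Cᵀ) (Bᵀ * B) =
      fromBlocks (z • 1 - z⁻¹ • (A * Aᵀ)) ((q - z⁻¹ * (2 * q ^ 2)) • C)
        ((q⁻¹ - z⁻¹ * (2 * q⁻¹ ^ 2)) • Cᵀ) (z • 1 - z⁻¹ • (Bᵀ * B)) := by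
    rw [fromBlocks_smul, sub_eq_add_neg, fromBlocks_neg, fromBlocks_add]
    simp only [← sub_eq_add_neg, smul_smul, sub_smul]
  rw [det_fromBlocks_fromBlocks_swap₂₃, det_fromBlocks_smul_one₂₂ hz0, Fintype.card_fin,
    fromRows_mul_fromCols_of_mul_eq_two_smul hABC hq, hblocks,
    det_fromBlocks_smul_of_isUnit hinv₁ hinv₃, hcoeff]
  ring
end
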